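/- Every worm game terminates: for every worm w (a finite list of natural numbers), there exists n such that w_n is the empty list, where w₀ = w and w_{n+1} = next(w_n, n+1). -/

import Mathlib

/-- One step of the worm game.  A worm is a finite list of natural numbers,
with head its last entry.  If the head is `0` it is cut away; if the head
`h > 0`, let `k` be the largest index `i < n` with `f i < h` (the good part
`r` is the first `k + 1` entries; `r = []` if no such `k` exists), decrease
the head by `1`, and replace the bad part `s` by `m + 1` concatenated
copies. -/
def wormNext (w : List ℕ) (m : ℕ) : List ℕ :=
  match w.getLast? with
  | none => []
  | some h =>
    if h = 0 then w.dropLast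
    else
      let body := w.dropLast
      let rlen := (List.range body.length).foldl
        (fun acc i => if body.getD i 0 < h then i + 1 else acc) 0
      let w' := body ++ [h - 1]
      w'.take rlen ++ (List.replicate (m + 1) (w'.drop rlen)).flatten

/-- The worm game sequence starting from `w`: `w₀ = w` and
`w_{n+1} = next (w_n) (n + 1)`. -/
def wormSeq (w : List ℕ) : ℕ → List ℕ
  | 0 => w
  | n + 1 => wormNext (wormSeq w n) (n + 1)

/-!
Write `A - 1` for a zero-free block `A` with every entry decreased, and assign ordinals to worms
by `o [] = 0`, `o A = ω ^ o (A - 1)` for nonempty zero-free `A`, and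
`o (A 0 B) = ω ^ o (A - 1) + 1 + o B`. Every step of the game lowers `o`: cutting a head `0` does;
a step on `A 0 B` with `B ≠ []` only acts on `B`; on a zero-free worm with head at least `2` the
step commutes with `- 1`; and a zero-free worm `A 1` has empty good part, so it becomes `m + 1`
copies of `A 0`, whose ordinal stays below `ω ^ (o (A - 1) + 1) ≤ o (A 1)` since `ω ^ β` is
closed under addition. As ordinals are well-founded, the game stops.
-/

section GoodPart

def goodPartLength (h : ℕ) (body : List ℕ) : ℕ :=
  (List.range body.length).foldl (fun acc i => if body.getD i 0 < h then i + 1 else acc) 0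

variable {h : ℕ}

theorem goodPartLength_concat (l : List ℕ) (x : ℕ) :
    goodPartLength h (l ++ [x]) = if x < h then l.length + 1 else goodPartLength h l := by
  have hget : ∀ i ∈ List.range l.length, (l ++ [x]).getD i 0 = l.getD i 0 := fun i hi =>
    List.getD_append _ _ _ _ (List.mem_range.1 hi)
  simp only [goodPartLength, List.length_append, List.length_singleton, List.range_succ,
    List.foldl_append, List.foldl_cons, List.foldl_nil, List.getD_append_right _ _ _ _ le_rfl,
    Nat.sub_self, List.getD_cons_zero]
  rw [List.foldl_ext _ _ _ fun acc i hi => by rw [hget i hi]]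

theorem goodPartLength_zero (l : List ℕ) : goodPartLength 0 l = 0 := by
  induction l using List.reverseRecOn with
  | nil => rfl
  | append_singleton l x ih => simp [goodPartLength_concat, ih]

theorem goodPartLength_map_succ (l : List ℕ) :
    goodPartLength (h + 1) (l.map (· + 1)) = goodPartLength h l := by
  induction l using List.reverseRecOn with
  | nil => rfl
  | append_singleton l x ih => simp [goodPartLength_concat, ih]

theorem goodPartLength_append_of_lt (l r : List ℕ) {x : ℕ} (hx : x < h) :
    goodPartLength h (l ++ x :: r) = l.length + (goodPartLength h r + 1) := by
  induction r using List.reverseRecOn with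
  | nil => rw [goodPartLength_concat, if_pos hx]; rfl
  | append_singleton r y ih =>
    rw [← List.cons_append, ← List.append_assoc, goodPartLength_concat, goodPartLength_concat, ih]
    split_ifs
    · simp only [List.length_append, List.length_cons]
      omega
    · rfl

end GoodPart

section Step

variable (m : ℕ)

theorem wormNext_concat_zero (l : List ℕ) : wormNext (l ++ [0]) m = l := by
  simp [wormNext]

theorem wormNext_concat_succ (l : List ℕ) (h : ℕ) :
    wormNext (l ++ [h + 1]) m =
      (l ++ [h]).take (goodPartLength (h + 1) l) ++
        (List.replicate (m + 1) ((l ++ [h]).drop (goodPartLength (h + 1) l))).flatten := by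
  simp [wormNext, goodPartLength]

theorem wormNext_append_zero_cons (l r : List ℕ) (hr : r ≠ []) :
    wormNext (l ++ 0 :: r) m = l ++ 0 :: wormNext r m := by
  obtain ⟨r, h, rfl⟩ : ∃ r' h, r = r' ++ [h] := ⟨_, _, (List.dropLast_append_getLast hr).symm⟩
  rw [← List.cons_append, ← List.append_assoc]
  cases h with
  | zero => simp only [wormNext_concat_zero]
  | succ h =>
    rw [wormNext_concat_succ, wormNext_concat_succ, goodPartLength_append_of_lt _ _ h.succ_pos,
      List.append_assoc, List.cons_append, List.take_length_add_append,
      List.drop_length_add_append, List.take_succ_cons, List.drop_succ_cons]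
    simp

theorem wormNext_map_succ_concat_one (l : List ℕ) :
    wormNext (l.map (· + 1) ++ [1]) m =
      (List.replicate (m + 1) (l.map (· + 1) ++ [0])).flatten := by
  have hgood : goodPartLength 1 (l.map (· + 1)) = 0 :=
    (goodPartLength_map_succ l).trans (goodPartLength_zero l)
  simp [wormNext_concat_succ, hgood]

theorem wormNext_map_succ (l : List ℕ) {h : ℕ} (hh : h ≠ 0) :
    wormNext ((l ++ [h]).map (· + 1)) m = (wormNext (l ++ [h]) m).map (· + 1) := by
  obtain ⟨h, rfl⟩ := Nat.exists_eq_add_one_of_ne_zero hh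
  rw [List.map_append, List.map_singleton, wormNext_concat_succ, wormNext_concat_succ,
    goodPartLength_map_succ]
  simp [List.map_take, List.map_drop, List.map_flatten, List.map_replicate]

end Step

section Ordinal

open Ordinal

theorem exists_eq_map_succ_or_eq_map_succ_append_zero_cons (w : List ℕ) :
    (∃ l : List ℕ, w = l.map (· + 1)) ∨ ∃ l r : List ℕ, w = l.map (· + 1) ++ 0 :: r := by
  induction w with
  | nil => exact .inl ⟨[], rfl⟩
  | cons a w ih =>
    cases a with
    | zero => exact .inr ⟨[], w, rfl⟩
    | succ a =>
      rcases ih with ⟨l, rfl⟩ | ⟨l, r, rfl⟩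
      · exact .inl ⟨a :: l, rfl⟩
      · exact .inr ⟨a :: l, r, rfl⟩

noncomputable def wormOrd (w : List ℕ) : Ordinal.{0} :=
  if h0 : 0 ∈ w then
    ω ^ wormOrd ((w.takeWhile (· ≠ 0)).map (· - 1)) + 1 + wormOrd (w.dropWhile (· ≠ 0)).tail
  else if w = [] then 0 else ω ^ wormOrd (w.map (· - 1))
termination_by w.sum + w.length
decreasing_by
  all_goals
    rcases exists_eq_map_succ_or_eq_map_succ_append_zero_cons w with ⟨l, rfl⟩ | ⟨l, r, rfl⟩
  all_goals try simp at h0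
  · simp [List.takeWhile_append_of_pos, Function.comp_def, List.sum_map_add]
    omega
  · simp [List.dropWhile_append_of_pos, List.sum_map_add]
    omega
  · rw [List.attach_map_val (f := (· - 1))]
    simp_all [Function.comp_def, List.sum_map_add, List.length_pos_iff]

theorem wormOrd_nil : wormOrd [] = 0 := by
  simp [wormOrd]

theorem wormOrd_map_succ {l : List ℕ} (hl : l ≠ []) :
    wormOrd (l.map (· + 1)) = ω ^ wormOrd l := by
  rw [wormOrd]
  simp [hl, Function.comp_def]

theorem wormOrd_map_succ_le (l : List ℕ) : wormOrd (l.map (· + 1)) ≤ ω ^ wormOrd l := by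
  rcases eq_or_ne l [] with rfl | hl
  · simp [wormOrd_nil]
  · exact (wormOrd_map_succ hl).le

theorem wormOrd_map_succ_append_zero_cons (l r : List ℕ) :
    wormOrd (l.map (· + 1) ++ 0 :: r) = ω ^ wormOrd l + 1 + wormOrd r := by
  rw [wormOrd]
  simp [List.takeWhile_append_of_pos, List.dropWhile_append_of_pos, Function.comp_def]

theorem wormOrd_lt_concat_zero (w : List ℕ) : wormOrd w < wormOrd (w ++ [0]) := by
  rcases exists_eq_map_succ_or_eq_map_succ_append_zero_cons w with ⟨l, rfl⟩ | ⟨l, r, rfl⟩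
  · calc wormOrd (l.map (· + 1)) ≤ ω ^ wormOrd l := wormOrd_map_succ_le l
      _ < ω ^ wormOrd l + 1 + wormOrd [] := by simp [wormOrd_nil]
      _ = wormOrd (l.map (· + 1) ++ [0]) := (wormOrd_map_succ_append_zero_cons l []).symm
  · rw [List.append_assoc, List.cons_append, wormOrd_map_succ_append_zero_cons,
      wormOrd_map_succ_append_zero_cons]
    exact add_lt_add_right (wormOrd_lt_concat_zero r) _
termination_by w.length
decreasing_by subst_vars; simp; omega

theorem wormOrd_flatten_replicate_lt (l : List ℕ) (n : ℕ) :
    wormOrd (List.replicate n (l.map (· + 1) ++ [0])).flatten < ω ^ (wormOrd l + 1) := by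
  have hlt : ω ^ wormOrd l < ω ^ (wormOrd l + 1) :=
    (opow_lt_opow_iff_right one_lt_omega0).2 (lt_add_one _)
  have hone : 1 < ω ^ (wormOrd l + 1) :=
    one_lt_opow.2 ⟨one_lt_omega0, (add_pos_of_right zero_lt_one _).ne'⟩
  induction n with
  | zero => exact wormOrd_nil.trans_lt (opow_pos _ omega0_pos)
  | succ n ih =>
    rw [List.replicate_succ, List.flatten_cons, List.append_assoc, List.singleton_append,
      wormOrd_map_succ_append_zero_cons]
    exact isPrincipal_add_omega0_opow _ (isPrincipal_add_omega0_opow _ hlt hone) ih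

theorem wormOrd_wormNext_lt (m : ℕ) {w : List ℕ} (hw : w ≠ []) :
    wormOrd (wormNext w m) < wormOrd w := by
  rcases exists_eq_map_succ_or_eq_map_succ_append_zero_cons w with ⟨l, rfl⟩ | ⟨l, r, rfl⟩
  · obtain ⟨l, h, rfl⟩ : ∃ l' h, l = l' ++ [h] :=
      ⟨_, _, (List.dropLast_append_getLast (by simpa using hw)).symm⟩
    rcases eq_or_ne h 0 with rfl | hh
    · calc wormOrd (wormNext ((l ++ [0]).map (· + 1)) m)
          = wormOrd (List.replicate (m + 1) (l.map (· + 1) ++ [0])).flatten := by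
            rw [List.map_append, List.map_singleton, wormNext_map_succ_concat_one]
        _ < ω ^ (wormOrd l + 1) := wormOrd_flatten_replicate_lt l (m + 1)
        _ ≤ ω ^ wormOrd (l ++ [0]) :=
            opow_le_opow_right omega0_pos (Order.add_one_le_of_lt (wormOrd_lt_concat_zero l))
        _ = wormOrd ((l ++ [0]).map (· + 1)) := (wormOrd_map_succ (by simp)).symm
    · rw [wormNext_map_succ m l hh, wormOrd_map_succ (l := l ++ [h]) (by simp)]
      exact (wormOrd_map_succ_le _).trans_lt
        ((opow_lt_opow_iff_right one_lt_omega0).2 (wormOrd_wormNext_lt m (by simp)))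
  · rcases eq_or_ne r [] with rfl | hr
    · rw [wormNext_concat_zero]
      exact wormOrd_lt_concat_zero _
    · rw [wormNext_append_zero_cons m _ _ hr, wormOrd_map_succ_append_zero_cons,
        wormOrd_map_succ_append_zero_cons]
      exact add_lt_add_right (wormOrd_wormNext_lt m hr) _
termination_by w.sum + w.length
decreasing_by all_goals subst_vars; simp [List.sum_map_add]; omega

end Ordinal

/-- Every worm game terminates: for every worm `w` there is an `n` with
`w_n = ∅`. -/
theorem worm_principle (w : List ℕ) : ∃ n, wormSeq w n = [] := by
  obtain ⟨n, hn⟩ := WellFounded.not_rel_apply_succ (r := (· < ·)) fun n => wormOrd (wormSeq w n)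
  exact ⟨n, by_contra fun hne => hn (wormOrd_wormNext_lt (n + 1) hne)⟩
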